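/- Let x, y, z : [0,∞) → ℝ be continuous with x(0) = y(0) = z(0) = 0. Define the binary operations (f △ g)(t) = inf_{0≤s≤t} [ f(s) − g(s) + g(t) ] and (f ▽ g)(t) = sup_{0≤s≤t} [ f(s) − g(s) + g(t) ] on such functions. Then ( x △ (z ▽ y) ) △ ( y △ z ) = ( x △ y ) △ z. -/

import Mathlib

/-!
Put `a = x - y`, `w = z - y` and let `M` be the running supremum of `w`. Then `z ▽ y = M + y`
and `y △ z = z - M`, and both sides become infima over `0 ≤ u ≤ s ≤ t`: the left side is
`inf (a u - M u + 2 M s - w s) + z t - M t` and the right side is `inf (a u - w s) + z t`.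
Exchanging the order of the infima, it suffices that for each `u ≤ t`
`inf_{[u,t]} (2 M - w) - M u = M t - sup_{[u,t]} w`.
If `M` does not grow on `[u, t]`, both sides equal `M u - sup_{[u,t]} w`. Otherwise
`sup_{[u,t]} w = M t`, and the left infimum is `M u`, attained at the first time after `u`
at which `w` climbs back to `M u`.
-/

/-- The operation `(f △ g)(t) = inf_{0 ≤ s ≤ t} (f s − g s + g t)`. -/
noncomputable def triOp (f g : ℝ → ℝ) : ℝ → ℝ :=
  fun t => sInf ((fun s => f s - g s + g t) '' Set.Icc 0 t)

/-- The operation `(f ▽ g)(t) = sup_{0 ≤ s ≤ t} (f s − g s + g t)`. -/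
noncomputable def nabOp (f g : ℝ → ℝ) : ℝ → ℝ :=
  fun t => sSup ((fun s => f s - g s + g t) '' Set.Icc 0 t)

open Set

noncomputable def runningInf (f : ℝ → ℝ) (t : ℝ) : ℝ := sInf (f '' Icc 0 t)

noncomputable def runningSup (f : ℝ → ℝ) (t : ℝ) : ℝ := sSup (f '' Icc 0 t)

noncomputable def pitman (f : ℝ → ℝ) (t : ℝ) : ℝ := 2 * runningSup f t - f t

section Running

variable {f g : ℝ → ℝ} {s t c : ℝ}

lemma runningInf_le (hf : BddBelow (f '' Icc 0 t)) (hs : s ∈ Icc 0 t) : runningInf f t ≤ f s :=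
  csInf_le hf (mem_image_of_mem f hs)

lemma le_runningInf (ht : 0 ≤ t) (h : ∀ s ∈ Icc 0 t, c ≤ f s) : c ≤ runningInf f t :=
  le_csInf ((nonempty_Icc.2 ht).image f) (forall_mem_image.2 h)

lemma le_runningSup (hf : BddAbove (f '' Icc 0 t)) (hs : s ∈ Icc 0 t) : f s ≤ runningSup f t :=
  le_csSup hf (mem_image_of_mem f hs)

lemma runningSup_le (ht : 0 ≤ t) (h : ∀ s ∈ Icc 0 t, f s ≤ c) : runningSup f t ≤ c :=
  csSup_le ((nonempty_Icc.2 ht).image f) (forall_mem_image.2 h)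

lemma runningInf_le_runningInf (hf : BddBelow (f '' Icc 0 t)) (hs : 0 ≤ s) (hst : s ≤ t) :
    runningInf f t ≤ runningInf f s :=
  le_runningInf hs fun _ hp => runningInf_le hf ⟨hp.1, hp.2.trans hst⟩

lemma runningSup_le_runningSup (hf : BddAbove (f '' Icc 0 t)) (hs : 0 ≤ s) (hst : s ≤ t) :
    runningSup f s ≤ runningSup f t :=
  runningSup_le hs fun _ hp => le_runningSup hf ⟨hp.1, hp.2.trans hst⟩

lemma image_neg_eq_neg_image (S : Set ℝ) : (-f) '' S = -(f '' S) := by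
  rw [← image_neg_eq_neg, image_image]
  rfl

lemma runningInf_neg : runningInf (-f) t = -runningSup f t := by
  rw [runningInf, runningSup, image_neg_eq_neg_image, Real.sInf_neg]

lemma exists_eq_runningSup (hf : ContinuousOn f (Icc 0 t)) (ht : 0 ≤ t) :
    ∃ v ∈ Icc 0 t, f v = runningSup f t :=
  (isCompact_Icc.image_of_continuousOn hf).sSup_mem ((nonempty_Icc.2 ht).image f)

lemma triOp_congr {f' g' : ℝ → ℝ} (ht : 0 ≤ t) (hf : EqOn f f' (Icc 0 t))
    (hg : EqOn g g' (Icc 0 t)) : triOp f g t = triOp f' g' t := by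
  simp only [triOp, hg ⟨ht, le_rfl⟩]
  exact congrArg sInf (image_congr fun s hs => by rw [hf hs, hg hs])

lemma triOp_eq_runningInf_add (hfg : BddBelow ((f - g) '' Icc 0 t)) (ht : 0 ≤ t) :
    triOp f g t = runningInf (f - g) t + g t := by
  have h := (OrderIso.addRight (g t)).map_csInf' ((nonempty_Icc.2 ht).image _) hfg
  rw [image_image] at h
  exact h.symm

lemma nabOp_eq_runningSup_add (hfg : BddAbove ((f - g) '' Icc 0 t)) (ht : 0 ≤ t) :
    nabOp f g t = runningSup (f - g) t + g t := by
  have h := (OrderIso.addRight (g t)).map_csSup' ((nonempty_Icc.2 ht).image _) hfg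
  rw [image_image] at h
  exact h.symm

lemma triOp_eq_sub_runningSup (hgf : BddAbove ((g - f) '' Icc 0 t)) (ht : 0 ≤ t) :
    triOp f g t = g t - runningSup (g - f) t := by
  have hfg : f - g = -(g - f) := (neg_sub g f).symm
  have hbdd : BddBelow ((f - g) '' Icc 0 t) := by
    rw [hfg, image_neg_eq_neg_image]
    exact bddBelow_neg.2 hgf
  rw [triOp_eq_runningInf_add hbdd ht, hfg, runningInf_neg, neg_add_eq_sub]

end Running

lemma ContinuousOn.exists_eq_forall_le_of_le_of_le {f : ℝ → ℝ} {u v c : ℝ} (huv : u ≤ v)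
    (hf : ContinuousOn f (Icc u v)) (hu : f u ≤ c) (hv : c ≤ f v) :
    ∃ r ∈ Icc u v, f r = c ∧ ∀ p ∈ Icc u r, f p ≤ c := by
  set T := Icc u v ∩ f ⁻¹' {c}
  have hT : T.Nonempty := by
    obtain ⟨r, hr, hrc⟩ := intermediate_value_Icc huv hf ⟨hu, hv⟩
    exact ⟨r, hr, hrc⟩
  have hTbdd : BddBelow T := ⟨u, fun _ hp => hp.1.1⟩
  obtain ⟨hr, hrc⟩ : sInf T ∈ T :=
    (hf.preimage_isClosed_of_isClosed isClosed_Icc isClosed_singleton).csInf_mem hT hTbdd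
  refine ⟨sInf T, hr, hrc, fun p hp => le_of_not_gt fun hcp => ?_⟩
  -- a value above `c` before `sInf T` would force an earlier hitting point of `c`
  have hpv : p ≤ v := hp.2.trans hr.2
  obtain ⟨q, hq, hqc⟩ := intermediate_value_Icc hp.1 (hf.mono (Icc_subset_Icc_right hpv))
    ⟨hu, hcp.le⟩
  have hTq : sInf T ≤ q := csInf_le hTbdd ⟨⟨hq.1, hq.2.trans hpv⟩, hqc⟩
  have hqp : q = p := le_antisymm hq.2 (hp.2.trans hTq)
  rw [← hqp, hqc] at hcp
  exact lt_irrefl c hcp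

section Pitman

variable {w : ℝ → ℝ} {u s t : ℝ}

lemma ContinuousOn.bddAbove_image_Icc (hw : ContinuousOn w (Ici 0)) (t : ℝ) :
    BddAbove (w '' Icc 0 t) :=
  isCompact_Icc.bddAbove_image (hw.mono Icc_subset_Ici_self)

lemma ContinuousOn.bddBelow_image_Icc (hw : ContinuousOn w (Ici 0)) (t : ℝ) :
    BddBelow (w '' Icc 0 t) :=
  isCompact_Icc.bddBelow_image (hw.mono Icc_subset_Ici_self)

lemma exists_mem_Icc_eq_runningSup (hw : ContinuousOn w (Ici 0)) (hu : 0 ≤ u) (hut : u ≤ t)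
    (hlt : runningSup w u < runningSup w t) : ∃ v ∈ Icc u t, w v = runningSup w t := by
  obtain ⟨v, hv, hvt⟩ := exists_eq_runningSup (hw.mono Icc_subset_Ici_self) (hu.trans hut)
  refine ⟨v, ⟨le_of_not_gt fun hvu => ?_, hv.2⟩, hvt⟩
  have := le_runningSup (hw.bddAbove_image_Icc u) ⟨hv.1, hvu.le⟩
  linarith

lemma le_pitman (hw : ContinuousOn w (Ici 0)) (hs : 0 ≤ s) : runningSup w s ≤ pitman w s := by
  have := le_runningSup (hw.bddAbove_image_Icc s) ⟨hs, le_rfl⟩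
  rw [pitman]
  linarith

lemma exists_mem_Icc_runningSup_sub_le_pitman (hw : ContinuousOn w (Ici 0)) (hu : 0 ≤ u)
    (hus : u ≤ s) (hst : s ≤ t) :
    ∃ s' ∈ Icc u t, runningSup w t - w s' + runningSup w u ≤ pitman w s := by
  have hMus := runningSup_le_runningSup (hw.bddAbove_image_Icc s) hu hus
  have hMst := runningSup_le_runningSup (hw.bddAbove_image_Icc t) (hu.trans hus) hst
  have hws := le_pitman hw (hu.trans hus)
  rw [pitman] at hws ⊢
  rcases (hMus.trans hMst).eq_or_lt with heq | hlt
  · exact ⟨s, ⟨hus, hst⟩, by linarith⟩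
  · obtain ⟨v, hv, hvt⟩ := exists_mem_Icc_eq_runningSup hw hu (hus.trans hst) hlt
    exact ⟨v, hv, by linarith⟩

lemma exists_mem_Icc_pitman_le_runningSup_sub (hw : ContinuousOn w (Ici 0)) (hu : 0 ≤ u)
    (hus : u ≤ s) (hst : s ≤ t) :
    ∃ r ∈ Icc u t, pitman w r ≤ runningSup w t - w s + runningSup w u := by
  have hMus := runningSup_le_runningSup (hw.bddAbove_image_Icc s) hu hus
  have hMst := runningSup_le_runningSup (hw.bddAbove_image_Icc t) (hu.trans hus) hst
  have hws := le_runningSup (hw.bddAbove_image_Icc t) ⟨hu.trans hus, hst⟩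
  rcases (hMus.trans hMst).eq_or_lt with heq | hlt
  · exact ⟨s, ⟨hus, hst⟩, by rw [pitman]; linarith⟩
  -- at the first time `r ≥ u` where `w` climbs back to `runningSup w u`, `pitman w r` equals it
  obtain ⟨v, hv, hvt⟩ := exists_mem_Icc_eq_runningSup hw hu (hus.trans hst) hlt
  obtain ⟨r, hr, hwr, hbefore⟩ :=
    (hw.mono fun p hp => hu.trans hp.1).exists_eq_forall_le_of_le_of_le hv.1
      (le_runningSup (hw.bddAbove_image_Icc u) ⟨hu, le_rfl⟩) (hvt ▸ hlt.le)
  have hMr : runningSup w r = runningSup w u := by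
    refine le_antisymm (runningSup_le (hu.trans hr.1) fun p hp => ?_)
      (runningSup_le_runningSup (hw.bddAbove_image_Icc r) hu hr.1)
    rcases le_total p u with hpu | hup
    · exact le_runningSup (hw.bddAbove_image_Icc u) ⟨hp.1, hpu⟩
    · exact hbefore p ⟨hup, hp.2⟩
  exact ⟨r, ⟨hr.1, hr.2.trans hv.2⟩, by rw [pitman, hMr, hwr]; linarith⟩

end Pitman

section Braid

variable {a w : ℝ → ℝ} {t : ℝ}

lemma bddBelow_sub_runningSup (ha : ∀ s, BddBelow (a '' Icc 0 s)) (hw : ContinuousOn w (Ici 0))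
    (t : ℝ) : BddBelow ((a - runningSup w) '' Icc 0 t) := by
  refine ⟨runningInf a t - runningSup w t, forall_mem_image.2 fun s hs => ?_⟩
  have := runningInf_le (ha t) hs
  have := runningSup_le_runningSup (hw.bddAbove_image_Icc t) hs.1 hs.2
  simp only [Pi.sub_apply]
  linarith

lemma bddBelow_runningInf_sub (ha : ∀ s, BddBelow (a '' Icc 0 s))
    (hw : ContinuousOn w (Ici 0)) : BddBelow ((runningInf a - w) '' Icc 0 t) := by
  refine ⟨runningInf a t - runningSup w t, forall_mem_image.2 fun s hs => ?_⟩
  have := runningInf_le_runningInf (ha t) hs.1 hs.2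
  have := le_runningSup (hw.bddAbove_image_Icc t) hs
  simp only [Pi.sub_apply]
  linarith

lemma bddBelow_runningInf_add_pitman (ha : ∀ s, BddBelow (a '' Icc 0 s))
    (hw : ContinuousOn w (Ici 0)) :
    BddBelow ((runningInf (a - runningSup w) + pitman w) '' Icc 0 t) := by
  refine ⟨runningInf (a - runningSup w) t + w 0, forall_mem_image.2 fun s hs => ?_⟩
  have := runningInf_le_runningInf (bddBelow_sub_runningSup ha hw t) hs.1 hs.2
  have := le_pitman hw hs.1
  have := le_runningSup (hw.bddAbove_image_Icc s) ⟨le_rfl, hs.1⟩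
  simp only [Pi.add_apply]
  linarith

lemma runningInf_add_pitman_eq (ha : ∀ s, BddBelow (a '' Icc 0 s))
    (hw : ContinuousOn w (Ici 0)) (ht : 0 ≤ t) :
    runningInf (runningInf (a - runningSup w) + pitman w) t
      = runningInf (runningInf a - w) t + runningSup w t := by
  set L := runningInf (runningInf (a - runningSup w) + pitman w) t
  set R := runningInf (runningInf a - w) t
  apply le_antisymm
  · suffices h : ∀ s ∈ Icc 0 t, ∀ u ∈ Icc 0 s, L - runningSup w t + w s ≤ a u by
      have := le_runningInf (c := L - runningSup w t) (f := runningInf a - w) ht fun s hs => by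
        have := le_runningInf hs.1 (h s hs)
        simp only [Pi.sub_apply]
        linarith
      linarith
    intro s hs u hu
    obtain ⟨r, hr, hrs⟩ := exists_mem_Icc_pitman_le_runningSup_sub hw hu.1 hu.2 hs.2
    have h1 := runningInf_le (bddBelow_runningInf_add_pitman ha hw) ⟨hu.1.trans hr.1, hr.2⟩
    have h2 := runningInf_le (bddBelow_sub_runningSup ha hw r) ⟨hu.1, hr.1⟩
    simp only [Pi.add_apply, Pi.sub_apply] at h1 h2
    linarith
  · suffices h : ∀ s ∈ Icc 0 t, ∀ u ∈ Icc 0 s,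
        R + runningSup w t - pitman w s + runningSup w u ≤ a u by
      refine le_runningInf ht fun s hs => ?_
      have := le_runningInf (c := R + runningSup w t - pitman w s) (f := a - runningSup w) hs.1
        fun u hu => by
          have := h s hs u hu
          simp only [Pi.sub_apply]
          linarith
      simp only [Pi.add_apply]
      linarith
    intro s hs u hu
    obtain ⟨s', hs', hs's⟩ := exists_mem_Icc_runningSup_sub_le_pitman hw hu.1 hu.2 hs.2
    have h1 := runningInf_le (bddBelow_runningInf_sub ha hw) ⟨hu.1.trans hs'.1, hs'.2⟩
    have h2 := runningInf_le (ha s') ⟨hu.1, hs'.1⟩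
    simp only [Pi.sub_apply] at h1
    linarith

end Braid

section Unfold

variable {x y z : ℝ → ℝ} {t : ℝ}

lemma triOp_triOp_nabOp_eq (hx : ContinuousOn x (Ici 0)) (hy : ContinuousOn y (Ici 0))
    (hz : ContinuousOn z (Ici 0)) (ht : 0 ≤ t) :
    triOp (triOp x (nabOp z y)) (triOp y z) t
      = runningInf (runningInf (x - y - runningSup (z - y)) + pitman (z - y)) t
        + z t - runningSup (z - y) t := by
  have hw : ContinuousOn (z - y) (Ici 0) := hz.sub hy
  have ha := (hx.sub hy).bddBelow_image_Icc
  set M := runningSup (z - y)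
  have hnab : EqOn (nabOp z y) (M + y) (Ici 0) := fun s hs =>
    nabOp_eq_runningSup_add (hw.bddAbove_image_Icc s) hs
  have hyz : EqOn (triOp y z) (z - M) (Ici 0) := fun s hs =>
    triOp_eq_sub_runningSup (hw.bddAbove_image_Icc s) hs
  have hsub : x - (M + y) = x - y - M := by abel
  have hxnab : EqOn (triOp x (nabOp z y)) (runningInf (x - y - M) + (M + y)) (Ici 0) :=
    fun s hs => by
      rw [triOp_congr hs (eqOn_refl _ _) (hnab.mono Icc_subset_Ici_self),
        triOp_eq_runningInf_add (hsub ▸ bddBelow_sub_runningSup ha hw s) hs, hsub]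
      rfl
  have hdiff : runningInf (x - y - M) + (M + y) - (z - M)
      = runningInf (x - y - M) + pitman (z - y) := by
    funext s
    simp only [pitman, Pi.add_apply, Pi.sub_apply, M]
    ring
  rw [triOp_congr ht (hxnab.mono Icc_subset_Ici_self) (hyz.mono Icc_subset_Ici_self),
    triOp_eq_runningInf_add (hdiff ▸ bddBelow_runningInf_add_pitman ha hw) ht, hdiff]
  simp only [Pi.sub_apply]
  ring

lemma triOp_triOp_eq (hx : ContinuousOn x (Ici 0)) (hy : ContinuousOn y (Ici 0))
    (hz : ContinuousOn z (Ici 0)) (ht : 0 ≤ t) :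
    triOp (triOp x y) z t = runningInf (runningInf (x - y) - (z - y)) t + z t := by
  have ha := (hx.sub hy).bddBelow_image_Icc
  have hxy : EqOn (triOp x y) (runningInf (x - y) + y) (Ici 0) := fun s hs =>
    triOp_eq_runningInf_add (ha s) hs
  have hdiff : runningInf (x - y) + y - z = runningInf (x - y) - (z - y) := by abel
  rw [triOp_congr ht (hxy.mono Icc_subset_Ici_self) (eqOn_refl _ _),
    triOp_eq_runningInf_add (hdiff ▸ bddBelow_runningInf_sub ha (hz.sub hy)) ht, hdiff]

end Unfold

theorem tri_nab_braid_general
    (x y z : ℝ → ℝ)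
    (hx : ContinuousOn x (Set.Ici 0)) (hy : ContinuousOn y (Set.Ici 0))
    (hz : ContinuousOn z (Set.Ici 0)) :
    ∀ t ∈ Set.Ici (0 : ℝ),
      triOp (triOp x (nabOp z y)) (triOp y z) t = triOp (triOp x y) z t := by
  intro t ht
  rw [triOp_triOp_nabOp_eq hx hy hz ht, triOp_triOp_eq hx hy hz ht,
    runningInf_add_pitman_eq (hx.sub hy).bddBelow_image_Icc (hz.sub hy) ht]
  ring

/-- Identity (3.8) of Biane–Bougerol–O'Connell, equivalent to the `n = 3` braid
relation for Pitman transforms: for continuous `x, y, z : [0,∞) → ℝ` vanishing at `0`,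
`(x △ (z ▽ y)) △ (y △ z) = (x △ y) △ z`. -/
theorem tri_nab_braid
    (x y z : ℝ → ℝ)
    (hx : ContinuousOn x (Set.Ici 0)) (hy : ContinuousOn y (Set.Ici 0))
    (hz : ContinuousOn z (Set.Ici 0))
    (hx0 : x 0 = 0) (hy0 : y 0 = 0) (hz0 : z 0 = 0) :
    ∀ t ∈ Set.Ici (0 : ℝ),
      triOp (triOp x (nabOp z y)) (triOp y z) t = triOp (triOp x y) z t :=
  tri_nab_braid_general x y z hx hy hz
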